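/- Every finitely generated subgroup of GL_n(ℂ) (n a positive natural number) is residually finite. -/

import Mathlib

/-!
The entries of finitely many generators of `H` and of their inverses generate a finitely generated
ring `R ⊆ ℂ`, and `H ≤ GLₙ(R)`. By the Nullstellensatz over the Jacobson ring `ℤ`, every
residue field `R ⧸ m` at a maximal ideal is finite, and since `R` is reduced the maximal ideals
of `R` intersect in `0`. So for `g ≠ 1` some entry of `g - 1` survives modulo some `m`, and
reduction modulo `m` maps `g` nontrivially into the finite group `GLₙ(R ⧸ m)`.
-/

def ResiduallyFinite (G : Type*) [Group G] : Prop :=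
  ∀ g : G, g ≠ 1 → ∃ (F : Type) (_ : Group F) (_ : Finite F) (φ : G →* F), φ g ≠ 1

theorem ResiduallyFinite.of_injective {G G' : Type*} [Group G] [Group G'] {f : G →* G'}
    (hf : Function.Injective f) (h : ResiduallyFinite G') : ResiduallyFinite G := by
  intro g hg
  obtain ⟨F, _, _, φ, hφ⟩ := h (f g) ((map_ne_one_iff f hf).mpr hg)
  exact ⟨F, _, ‹_›, φ.comp f, hφ⟩

theorem ResiduallyFinite.of_le_range {G G' : Type*} [Group G] [Group G'] {f : G' →* G}
    (hf : Function.Injective f) {H : Subgroup G} (hH : H ≤ f.range) (h : ResiduallyFinite G') :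
    ResiduallyFinite H :=
  h.of_injective (f := (MonoidHom.ofInjective hf).symm.toMonoidHom.comp (Subgroup.inclusion hH))
    ((MonoidHom.ofInjective hf).symm.injective.comp (Subgroup.inclusion_injective hH))

instance Int.isJacobsonRing : IsJacobsonRing ℤ := by
  refine isJacobsonRing_iff_prime_eq.mpr fun P hP => ?_
  rcases eq_or_ne P ⊥ with rfl | hP0
  · -- `x` in the Jacobson radical makes `x * x + 1` a unit of `ℤ`.
    refine le_antisymm (fun x hx => ?_) Ideal.le_jacobson
    rcases Int.isUnit_iff.mp (Ideal.mem_jacobson_bot.mp hx x) with h | h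
    · simpa using h
    · nlinarith
  · have := hP.isMaximal hP0
    exact Ideal.jacobson_eq_self_of_isMaximal

theorem finite_of_moduleFinite_int (K : Type*) [Field K] [Module.Finite ℤ K] : Finite K := by
  -- `K` is integral over `ℤ`, so `J = ker (ℤ → K)` is maximal and `ℤ ⧸ J` is a finite field.
  set J := (⊥ : Ideal K).under ℤ
  have hJ : J.IsMaximal := Ideal.IsMaximal.under ℤ ⊥
  have hJ0 : J ≠ ⊥ := fun h => Int.not_isField (Ring.isField_iff_maximal_bot.mpr (h ▸ hJ))
  have : Finite (ℤ ⧸ J) := Ring.HasFiniteQuotients.finiteQuotient hJ0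
  have : Module.Finite (ℤ ⧸ J) (K ⧸ (⊥ : Ideal K)) :=
    Module.Finite.of_restrictScalars_finite ℤ _ _
  have : Finite (K ⧸ (⊥ : Ideal K)) := Module.finite_of_finite (ℤ ⧸ J)
  exact .of_equiv _ (RingEquiv.quotientBot K).toEquiv

theorem Ideal.finite_quotient_of_finiteType_int {R : Type*} [CommRing R] [Algebra.FiniteType ℤ R]
    (m : Ideal R) [m.IsMaximal] : Finite (R ⧸ m) :=
  letI := Ideal.Quotient.field m
  haveI := finite_of_finite_type_of_isJacobsonRing ℤ (R ⧸ m)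
  finite_of_moduleFinite_int (R ⧸ m)

theorem exists_ideal_finite_quotient_notMem {R : Type*} [CommRing R] [IsReduced R]
    [Algebra.FiniteType ℤ R] {a : R} (ha : a ≠ 0) :
    ∃ I : Ideal R, Finite (R ⧸ I) ∧ a ∉ I := by
  have : IsJacobsonRing R := isJacobsonRing_of_finiteType (A := ℤ)
  have hjac : (⊥ : Ideal R).jacobson = ⊥ := by
    rw [← Ideal.radical_eq_jacobson, Ideal.radical_bot_of_isReduced]
  have : a ∉ (⊥ : Ideal R).jacobson := by rwa [hjac, Ideal.mem_bot]
  obtain ⟨m, ⟨-, hm⟩, ham⟩ : ∃ m : Ideal R, (⊥ ≤ m ∧ m.IsMaximal) ∧ a ∉ m := by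
    simpa [Ideal.jacobson, Ideal.mem_sInf] using this
  exact ⟨m, m.finite_quotient_of_finiteType_int, ham⟩

open Matrix

namespace Matrix.GeneralLinearGroup

theorem residuallyFinite {n : Type} [Fintype n] [DecidableEq n] {R : Type} [CommRing R]
    (hR : ∀ a : R, a ≠ 0 → ∃ I : Ideal R, Finite (R ⧸ I) ∧ a ∉ I) :
    ResiduallyFinite (GL n R) := by
  intro g hg
  obtain ⟨i, j, hij⟩ : ∃ i j, (g : Matrix n n R) i j ≠ (1 : Matrix n n R) i j := by
    by_contra! h
    exact hg (Units.ext (Matrix.ext h))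
  obtain ⟨I, hIfin, hI⟩ := hR _ (sub_ne_zero.mpr hij)
  refine ⟨GL n (R ⧸ I), _, inferInstance, map (Ideal.Quotient.mk I), fun h => ?_⟩
  have hentry : map (Ideal.Quotient.mk I) g i j = map (Ideal.Quotient.mk I) 1 i j := by
    rw [h, GeneralLinearGroup.map_one]
  rw [GeneralLinearGroup.map_apply, GeneralLinearGroup.map_apply] at hentry
  exact hI (Ideal.Quotient.eq.mp hentry)

variable {n : Type*} [Fintype n] [DecidableEq n]

theorem map_injective {R S : Type*} [CommRing R] [CommRing S] {f : R →+* S}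
    (hf : Function.Injective f) : Function.Injective (map (n := n) f) :=
  Units.map_injective (Matrix.map_injective hf)

variable {k A : Type*} [CommRing k] [CommRing A] [Algebra k A]

theorem mem_range_map_val (R : Subalgebra k A) {g : GL n A} (hg : ∀ i j, g i j ∈ R)
    (hg' : ∀ i j, g⁻¹ i j ∈ R) : g ∈ (map (R.val : R →+* A)).range := by
  let M : Matrix n n R := fun i j => ⟨g i j, hg i j⟩
  let M' : Matrix n n R := fun i j => ⟨g⁻¹ i j, hg' i j⟩
  have hinj : Function.Injective (RingHom.mapMatrix (m := n) (R.val : R →+* A)) :=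
    Matrix.map_injective Subtype.val_injective
  refine ⟨⟨M, M', hinj ?_, hinj ?_⟩, Units.ext rfl⟩
  · rw [map_mul, map_one]; exact g.mul_inv
  · rw [map_mul, map_one]; exact g.inv_mul

theorem _root_.Subgroup.FG.exists_fg_subalgebra_le_range_map {H : Subgroup (GL n A)} (hH : H.FG) :
    ∃ R : Subalgebra k A, R.FG ∧ H ≤ (map (R.val : R →+* A)).range := by
  obtain ⟨S, rfl⟩ := hH
  let T : Set A := ⋃ g ∈ S, (Set.range fun p : n × n => g p.1 p.2) ∪
    Set.range fun p : n × n => g⁻¹ p.1 p.2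
  have hT : T.Finite :=
    S.finite_toSet.biUnion fun _ _ => (Set.finite_range _).union (Set.finite_range _)
  refine ⟨Algebra.adjoin k T, Subalgebra.fg_def.mpr ⟨T, hT, rfl⟩,
    (Subgroup.closure_le _).mpr fun g hg => ?_⟩
  exact mem_range_map_val _
    (fun i j => Algebra.subset_adjoin (Set.mem_biUnion hg (Or.inl ⟨(i, j), rfl⟩)))
    (fun i j => Algebra.subset_adjoin (Set.mem_biUnion hg (Or.inr ⟨(i, j), rfl⟩)))

end Matrix.GeneralLinearGroup

theorem fg_subgroup_GL_residuallyFinite_general (n : ℕ)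
    (H : Subgroup (Matrix.GeneralLinearGroup (Fin n) ℂ)) (hH : Group.FG H) :
    ResiduallyFinite H := by
  obtain ⟨R, hRfg, hHR⟩ :=
    ((Group.fg_iff_subgroup_fg H).mp hH).exists_fg_subalgebra_le_range_map (k := ℤ)
  have : Algebra.FiniteType ℤ R := (Subalgebra.fg_iff_finiteType R).mp hRfg
  have hGL : ResiduallyFinite (GL (Fin n) R) :=
    GeneralLinearGroup.residuallyFinite fun _ => exists_ideal_finite_quotient_notMem
  exact hGL.of_le_range (GeneralLinearGroup.map_injective Subtype.val_injective) hHR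

/-- Malcev: every finitely generated subgroup of GLₙ(ℂ) is residually finite. -/
theorem fg_subgroup_GL_residuallyFinite (n : ℕ) (hn : 0 < n)
    (H : Subgroup (Matrix.GeneralLinearGroup (Fin n) ℂ)) (hH : Group.FG H) :
    ResiduallyFinite H :=
  fg_subgroup_GL_residuallyFinite_general n H hH
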